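/- arXiv:1302.7119 — 6 statements merged into one kernel-verified Lean document; each statement's English description precedes it below -/
import Mathlib

section
/- Fix integers r ≥ 0, i with 1 ≤ i ≤ r+1, and j ≥ 1. For every point (x, z_0, …, z_{r+1}) ∈ ℝ^{r+3} with x ≠ 0, the function (x^{i+j}/(i+j)!)·D^i(z_0·x^{−j}) (where D is applied i times to the smooth function (x,z) ↦ z_0·x^{−j} on the open set {x ≠ 0}) equals the polynomial expression Σ_{m=0}^{i} (−1)^{i−m}·binom(i,m)·((i+j−m−1)!/((j−1)!·(i+j)!))·x^m·z_m; consequently g_{i,j} extends to a polynomial function on all of ℝ^{r+3} which is linear in z_0, …, z_i. -/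
open scoped BigOperators

/-- Partial derivative of a function on `ℝⁿ = (Fin n → ℝ)` with respect to the `m`-th
coordinate (and `0` if `m` is out of range). -/
noncomputable def pderiv' (n m : ℕ) (f : (Fin n → ℝ) → ℝ) : (Fin n → ℝ) → ℝ :=
  fun p => if h : m < n then fderiv ℝ f p (Pi.single (⟨m, h⟩ : Fin n) 1) else 0

/-- The total derivative operator `D f = ∂f/∂x + ∑_{m=0}^{r} z_{m+1} ∂f/∂z_m` on functions of
the variables `(x, z_0, …, z_{r+1})`, where `x` is coordinate `0` and `z_m` is coordinate
`m+1`. -/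
noncomputable def Dop (r : ℕ) (f : (Fin (r+3) → ℝ) → ℝ) : (Fin (r+3) → ℝ) → ℝ :=
  fun p => pderiv' (r+3) 0 f p +
    ∑ m : Fin (r+1), p ⟨m.val + 2, by have := m.isLt; omega⟩ * pderiv' (r+3) (m.val + 1) f p

/-- The polynomial function
`g_{i,j}(x,z) = ∑_{m=0}^{i} (−1)^{i−m} C(i,m) ((i+j−m−1)!/((j−1)!(i+j)!)) x^m z_m`. -/
noncomputable def gfun (r i j : ℕ) : (Fin (r+3) → ℝ) → ℝ :=
  fun p => ∑ m : Fin (i+1),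
    (-1 : ℝ) ^ (i - m.val) * (i.choose m.val : ℝ) *
      ((Nat.factorial (i + j - m.val - 1) : ℝ) /
        ((Nat.factorial (j - 1) : ℝ) * (Nat.factorial (i + j) : ℝ))) *
      (p 0) ^ (m.val) * (if h : m.val + 1 < r + 3 then p ⟨m.val + 1, h⟩ else 0)

/-- `g_{i,j}^{(s)} = ∂^s g_{i,j} / ∂x^s`. -/
noncomputable def gs (r i j s : ℕ) : (Fin (r+3) → ℝ) → ℝ :=
  (pderiv' (r+3) 0)^[s] (gfun r i j)

/-!
`D` is the derivation along the vector field `(1, z_1, …, z_{r+1}, 0)`: it differentiates in `x`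
and shifts `z_m ↦ z_{m+1}` (with `z_{r+2} = 0`, as in `gfun`). By the Leibniz rule
`Dᵏ(z_0 x^{-j}) = ∑_a C(k,a) z_a ∂ₓ^{k-a}(x^{-j})`, and
`∂ₓᵇ x^{-j} = (-1)^b (b+j-1)!/(j-1)! x^{-(b+j)}`; multiplying by `x^{i+j}/(i+j)!` gives the
polynomial `g_{i,j}`, visibly linear in `z`.
-/

open Finset

noncomputable def zCoord (r m : ℕ) : (Fin (r+3) → ℝ) →L[ℝ] ℝ :=
  if h : m + 1 < r + 3 then ContinuousLinearMap.proj ⟨m + 1, h⟩ else 0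

lemma zCoord_apply (r m : ℕ) (p : Fin (r+3) → ℝ) :
    zCoord r m p = if h : m + 1 < r + 3 then p ⟨m + 1, h⟩ else 0 := by
  unfold zCoord
  split <;> rfl

-- The vector `(1, z_1, …, z_{r+1}, 0)`.
noncomputable def totalDir (r : ℕ) (p : Fin (r+3) → ℝ) : Fin (r+3) → ℝ :=
  Pi.single 0 1 + ∑ m : Fin (r+1), p ⟨m + 2, by omega⟩ • Pi.single ⟨m + 1, by omega⟩ 1

lemma Dop_eq_fderiv_totalDir (r : ℕ) (f : (Fin (r+3) → ℝ) → ℝ) (p : Fin (r+3) → ℝ) :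
    Dop r f p = fderiv ℝ f p (totalDir r p) := by
  simp only [Dop, pderiv', totalDir, map_add, map_sum, map_smul, smul_eq_mul]
  simp only [dif_pos (show 0 < r + 3 by omega)]
  exact congrArg _ (sum_congr rfl fun m _ => by rw [dif_pos (by omega)])

lemma totalDir_zero (r : ℕ) (p : Fin (r+3) → ℝ) : totalDir r p 0 = 1 := by
  simp [totalDir, Finset.sum_apply]

lemma zCoord_totalDir (r m : ℕ) (p : Fin (r+3) → ℝ) :
    zCoord r m (totalDir r p) = zCoord r (m + 1) p := by
  simp only [zCoord_apply, totalDir, Pi.add_apply, Finset.sum_apply, Pi.smul_apply,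
    Pi.single_apply, smul_eq_mul, mul_ite, mul_one, mul_zero]
  have hne : ∀ h : m + 1 < r + 3, (⟨m + 1, h⟩ : Fin (r+3)) ≠ 0 := fun _ => by
    simp [Fin.ext_iff]
  rcases lt_or_ge (m + 2) (r + 3) with hm | hm
  · rw [dif_pos (by omega), dif_pos hm, if_neg (hne _), zero_add,
      Fintype.sum_eq_single ⟨m, by omega⟩ fun x hx => if_neg ?_, if_pos rfl]
    simpa [Fin.ext_iff] using Ne.symm hx
  · rw [dif_neg (by omega : ¬m + 1 + 1 < r + 3)]
    by_cases h1 : m + 1 < r + 3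
    · rw [dif_pos h1, if_neg (hne h1), zero_add]
      exact sum_eq_zero fun x _ => if_neg (by simp [Fin.ext_iff]; omega)
    · rw [dif_neg h1]

lemma Dop_congr {r : ℕ} {f g : (Fin (r+3) → ℝ) → ℝ} {p : Fin (r+3) → ℝ}
    (h : f =ᶠ[nhds p] g) :
    Dop r f p = Dop r g p := by
  rw [Dop_eq_fderiv_totalDir, Dop_eq_fderiv_totalDir, h.fderiv_eq]

lemma Dop_const_mul {r : ℕ} (c : ℝ) {f : (Fin (r+3) → ℝ) → ℝ} {p : Fin (r+3) → ℝ}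
    (hf : DifferentiableAt ℝ f p) :
    Dop r (fun q => c * f q) p = c * Dop r f p := by
  rw [Dop_eq_fderiv_totalDir, Dop_eq_fderiv_totalDir, fderiv_const_mul hf]
  rfl

lemma Dop_fun_sum {r : ℕ} {ι : Type*} (s : Finset ι) {f : ι → (Fin (r+3) → ℝ) → ℝ}
    {p : Fin (r+3) → ℝ} (hf : ∀ i ∈ s, DifferentiableAt ℝ (f i) p) :
    Dop r (fun q => ∑ i ∈ s, f i q) p = ∑ i ∈ s, Dop r (f i) p := by
  simp only [Dop_eq_fderiv_totalDir, fderiv_fun_sum hf, _root_.sum_apply]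

lemma hasFDerivAt_zCoord_mul_zpow (r m : ℕ) (e : ℤ) {p : Fin (r+3) → ℝ} (hp : p 0 ≠ 0) :
    HasFDerivAt (fun q => zCoord r m q * q 0 ^ e)
      (zCoord r m p • ((e * p 0 ^ (e - 1)) • ContinuousLinearMap.proj (0 : Fin (r+3))) +
        p 0 ^ e • zCoord r m) p := by
  have hpow : HasFDerivAt (fun q : Fin (r+3) → ℝ => q 0 ^ e)
      ((e * p 0 ^ (e - 1)) • ContinuousLinearMap.proj (0 : Fin (r+3))) p :=
    (hasDerivAt_zpow e (p 0) (Or.inl hp)).comp_hasFDerivAt (h₂ := (· ^ e)) p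
      (hasFDerivAt_apply (𝕜 := ℝ) 0 p)
  exact (zCoord r m).hasFDerivAt.mul hpow

lemma Dop_zCoord_mul_zpow (r m : ℕ) (e : ℤ) {p : Fin (r+3) → ℝ} (hp : p 0 ≠ 0) :
    Dop r (fun q => zCoord r m q * q 0 ^ e) p =
      zCoord r (m + 1) p * p 0 ^ e + e * (zCoord r m p * p 0 ^ (e - 1)) := by
  rw [Dop_eq_fderiv_totalDir, (hasFDerivAt_zCoord_mul_zpow r m e hp).fderiv]
  simp [totalDir_zero, zCoord_totalDir]
  ring

-- `z_a · ∂ₓᵇ(x^{-j})`.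
noncomputable def leibnizTerm (r j a b : ℕ) (q : Fin (r+3) → ℝ) : ℝ :=
  ((-1) ^ b * j.ascFactorial b) * (zCoord r a q * q 0 ^ (-((b + j : ℕ) : ℤ)))

lemma differentiableAt_leibnizTerm (r j a b : ℕ) {p : Fin (r+3) → ℝ} (hp : p 0 ≠ 0) :
    DifferentiableAt ℝ (leibnizTerm r j a b) p :=
  (hasFDerivAt_zCoord_mul_zpow r a _ hp).differentiableAt.const_mul _

lemma Dop_leibnizTerm (r j a b : ℕ) {p : Fin (r+3) → ℝ} (hp : p 0 ≠ 0) :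
    Dop r (leibnizTerm r j a b) p =
      leibnizTerm r j (a + 1) b p + leibnizTerm r j a (b + 1) p := by
  unfold leibnizTerm
  rw [Dop_const_mul _ (hasFDerivAt_zCoord_mul_zpow r a _ hp).differentiableAt,
    Dop_zCoord_mul_zpow r a _ hp, Nat.ascFactorial_succ,
    show -((b + j : ℕ) : ℤ) - 1 = -((b + 1 + j : ℕ) : ℤ) by push_cast; ring]
  push_cast
  ring

noncomputable def leibnizSum (r j k : ℕ) (q : Fin (r+3) → ℝ) : ℝ :=
  ∑ a ∈ range (k + 1), (k.choose a : ℝ) * leibnizTerm r j a (k - a) q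

lemma Dop_leibnizSum (r j k : ℕ) {p : Fin (r+3) → ℝ} (hp : p 0 ≠ 0) :
    Dop r (leibnizSum r j k) p = leibnizSum r j (k + 1) p := by
  unfold leibnizSum
  rw [Dop_fun_sum _ fun a _ => (differentiableAt_leibnizTerm r j a _ hp).const_mul _,
    sum_choose_succ_mul (fun a b => leibnizTerm r j a b p), ← sum_add_distrib]
  refine sum_congr rfl fun a ha => ?_
  rw [Dop_const_mul _ (differentiableAt_leibnizTerm r j a _ hp), Dop_leibnizTerm r j a _ hp,
    Nat.sub_add_comm (mem_range_succ_iff.mp ha), mul_add, add_comm]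

lemma Dop_iterate_eq_leibnizSum (r j k : ℕ) {p : Fin (r+3) → ℝ} (hp : p 0 ≠ 0) :
    (Dop r)^[k] (fun q => q 1 / q 0 ^ j) p = leibnizSum r j k p := by
  induction k generalizing p with
  | zero => simp [leibnizSum, leibnizTerm, zCoord_apply, div_eq_mul_inv]
  | succ k ih =>
    have hnear : (Dop r)^[k] (fun q => q 1 / q 0 ^ j) =ᶠ[nhds p] leibnizSum r j k := by
      filter_upwards [(continuous_apply 0).continuousAt.eventually_ne hp] with q hq using ih hq
    rw [Function.iterate_succ_apply', Dop_congr hnear, Dop_leibnizSum r j k hp]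

lemma leibnizSum_eq_gfun {r j : ℕ} (i : ℕ) (hj : 1 ≤ j) {p : Fin (r+3) → ℝ}
    (hp : p 0 ≠ 0) :
    p 0 ^ (i + j) / (i + j).factorial * leibnizSum r j i p = gfun r i j p := by
  rw [leibnizSum, ← Fin.sum_univ_eq_sum_range, mul_sum]
  refine sum_congr rfl fun m _ => ?_
  have hm : (m : ℕ) ≤ i := Nat.lt_succ_iff.mp m.isLt
  have hfact : ((j - 1).factorial : ℝ) * j.ascFactorial (i - m) = (i + j - m - 1).factorial := by
    rw [show i + j - m - 1 = j + (i - m) - 1 by omega, ← Nat.factorial_mul_ascFactorial' j _ hj]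
    push_cast; rfl
  have hpow : p 0 ^ (i + j) = p 0 ^ (m : ℕ) * p 0 ^ (i - m + j) := by
    rw [← pow_add]; congr 1; omega
  simp only [leibnizTerm, zCoord_apply, zpow_neg, zpow_natCast, ← hfact, hpow]
  field_simp

lemma gfun_cons_smul_add (r i j : ℕ) (x : ℝ) (z w : Fin (r+2) → ℝ) (c : ℝ) :
    gfun r i j (Fin.cons x (c • z + w)) =
      c * gfun r i j (Fin.cons x z) + gfun r i j (Fin.cons x w) := by
  simp only [gfun, mul_sum, ← sum_add_distrib, Fin.cons_zero]
  refine sum_congr rfl fun m _ => ?_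
  split_ifs with h
  · rw [show (⟨m + 1, h⟩ : Fin (r+3)) = Fin.succ ⟨m, by omega⟩ from rfl]
    simp only [Fin.cons_succ, Pi.add_apply, Pi.smul_apply, smul_eq_mul]
    ring
  · ring

theorem stmt_0_general (r i j : ℕ) (hj : 1 ≤ j) :
    (∀ p : Fin (r+3) → ℝ, p 0 ≠ 0 →
      (p 0) ^ (i + j) / (Nat.factorial (i + j) : ℝ) *
        ((Dop r)^[i] (fun q => q 1 / (q 0) ^ j)) p
      = gfun r i j p) ∧
    (∀ (x : ℝ) (z w : Fin (r+2) → ℝ) (c : ℝ),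
      gfun r i j (Fin.cons x (c • z + w)) =
        c * gfun r i j (Fin.cons x z) + gfun r i j (Fin.cons x w)) :=
  ⟨fun p hp => by rw [Dop_iterate_eq_leibnizSum r j i hp, leibnizSum_eq_gfun i hj hp],
    gfun_cons_smul_add r i j⟩

/-- for `x ≠ 0`, `(x^{i+j}/(i+j)!) · Dⁱ(z₀ · x^{−j})` equals the polynomial
expression defining `g_{i,j}`; consequently `g_{i,j}` is a polynomial function on all of
`ℝ^{r+3}` which is linear in the variables `z_0, …, z_{r+1}`. -/
theorem stmt_0 (r i j : ℕ) (hi : 1 ≤ i) (hir : i ≤ r + 1) (hj : 1 ≤ j) :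
    (∀ p : Fin (r+3) → ℝ, p 0 ≠ 0 →
      (p 0) ^ (i + j) / (Nat.factorial (i + j) : ℝ) *
        ((Dop r)^[i] (fun q => q 1 / (q 0) ^ j)) p
      = gfun r i j p) ∧
    (∀ (x : ℝ) (z w : Fin (r+2) → ℝ) (c : ℝ),
      gfun r i j (Fin.cons x (c • z + w)) =
        c * gfun r i j (Fin.cons x z) + gfun r i j (Fin.cons x w)) :=
  stmt_0_general r i j hj
end

section
/- For every integer r ≥ 0 and every 0 ≤ s ≤ r, the function f = g_{r,2}^{(s)} = ∂^s g_{r,2}/∂x^s satisfies D(D f) = 0 identically on ℝ^{r+3} and ∂f/∂z_{r+1} = 0 identically; in particular D²(g_{r,2}) = 0. -/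
open scoped BigOperators

/-! Functions `∑ₘ aₘ(x) zₘ` with polynomial coefficients are stable under `∂/∂x` and under `D`,
which acts on the coefficients by `aₘ ↦ aₘ' + aₘ₋₁`. This action commutes with `d/dx`, so the
coefficients of `D²(g^{(s)})` are the `s`-th derivatives of those of `D²g`, namely
`aₘ'' + 2aₘ₋₁' + aₘ₋₂` with `aₘ = cₘ xᵐ`. Since `m! (r+2)! cₘ = (-1)^{r-m} r! (r+1-m)` is an
alternating affine sequence in `m`, these vanish for every `m ≤ r + 1`. The coefficient of
`z_{r+1}` in `g` is zero because `binom(r, r+1) = 0`. -/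

open Polynomial

noncomputable def linearInZ (n : ℕ) (a : ℕ → ℝ[X]) (p : Fin (n + 1) → ℝ) : ℝ :=
  ∑ m : Fin n, (a m).eval (p 0) * p m.succ

lemma pderiv'_eq_of_hasFDerivAt {n : ℕ} {f : (Fin n → ℝ) → ℝ} {f' : (Fin n → ℝ) →L[ℝ] ℝ}
    {p : Fin n → ℝ} (hf : HasFDerivAt f f' p) (i : ℕ) (hi : i < n) :
    pderiv' n i f p = f' (Pi.single ⟨i, hi⟩ 1) := by
  simp [pderiv', hi, hf.fderiv]

lemma hasFDerivAt_eval_apply {ι : Type*} [Fintype ι] (P : ℝ[X]) (i : ι) (p : ι → ℝ) :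
    HasFDerivAt (fun q : ι → ℝ => P.eval (q i))
      (P.derivative.eval (p i) • ContinuousLinearMap.proj (R := ℝ) (φ := fun _ => ℝ) i) p := by
  have hi : HasFDerivAt (fun q : ι → ℝ => q i)
      (ContinuousLinearMap.proj (R := ℝ) (φ := fun _ => ℝ) i) p :=
    hasFDerivAt_apply i p
  exact (P.hasDerivAt (p i)).comp_hasFDerivAt p hi

lemma hasFDerivAt_linearInZ (n : ℕ) (a : ℕ → ℝ[X]) (p : Fin (n + 1) → ℝ) :
    HasFDerivAt (linearInZ n a)
      (∑ m : Fin n,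
        ((a m).eval (p 0) • ContinuousLinearMap.proj (R := ℝ) (φ := fun _ => ℝ) m.succ +
          p m.succ • ((a m).derivative.eval (p 0) •
            ContinuousLinearMap.proj (R := ℝ) (φ := fun _ => ℝ) 0))) p :=
  HasFDerivAt.fun_sum fun m _ =>
    (hasFDerivAt_eval_apply (a m) 0 p).mul (hasFDerivAt_apply m.succ p)

lemma pderiv'_zero_linearInZ (n : ℕ) (a : ℕ → ℝ[X]) :
    pderiv' (n + 1) 0 (linearInZ n a) = linearInZ n (fun m => derivative (a m)) := by
  funext p
  rw [pderiv'_eq_of_hasFDerivAt (hasFDerivAt_linearInZ n a p) 0 n.succ_pos]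
  simp [linearInZ, Fin.succ_ne_zero, mul_comm]

lemma pderiv'_succ_linearInZ (n : ℕ) (a : ℕ → ℝ[X]) (j : Fin n) (p : Fin (n + 1) → ℝ) :
    pderiv' (n + 1) (j + 1) (linearInZ n a) p = (a j).eval (p 0) := by
  rw [pderiv'_eq_of_hasFDerivAt (hasFDerivAt_linearInZ n a p) (j + 1) (by omega)]
  have hj : (⟨j + 1, by omega⟩ : Fin (n + 1)) = j.succ := rfl
  simp [hj, Pi.single_apply]

lemma iterate_pderiv'_zero_linearInZ (n s : ℕ) (a : ℕ → ℝ[X]) :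
    (pderiv' (n + 1) 0)^[s] (linearInZ n a) = linearInZ n (fun m => derivative^[s] (a m)) := by
  induction s with
  | zero => rfl
  | succ s ih =>
    rw [Function.iterate_succ_apply', ih, pderiv'_zero_linearInZ]
    simp only [Function.iterate_succ_apply']

lemma linearInZ_eq_zero (n : ℕ) (a : ℕ → ℝ[X]) (ha : ∀ m < n, a m = 0) :
    linearInZ n a = 0 := by
  funext p
  simp [linearInZ, ha _ (Fin.is_lt _)]

noncomputable def prevCoeff (a : ℕ → ℝ[X]) : ℕ → ℝ[X]
  | 0 => 0
  | m + 1 => a m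

noncomputable def totalDerivCoeff (a : ℕ → ℝ[X]) (m : ℕ) : ℝ[X] :=
  derivative (a m) + prevCoeff a m

lemma Dop_linearInZ (r : ℕ) (a : ℕ → ℝ[X]) :
    Dop r (linearInZ (r + 2) a) = linearInZ (r + 2) (totalDerivCoeff a) := by
  funext p
  have hz (m : Fin (r + 1)) :
      pderiv' (r + 3) (m + 1) (linearInZ (r + 2) a) p = (a m).eval (p 0) :=
    pderiv'_succ_linearInZ (r + 2) a m.castSucc p
  simp only [Dop, pderiv'_zero_linearInZ, hz, linearInZ, totalDerivCoeff, eval_add, add_mul,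
    Finset.sum_add_distrib, Fin.sum_univ_succ (n := r + 1), Fin.val_zero, Fin.val_succ,
    prevCoeff, eval_zero, zero_mul, add_zero]
  simp only [mul_comm (p _)]
  rw [add_assoc]
  rfl

lemma totalDerivCoeff_iterate_derivative (s : ℕ) (a : ℕ → ℝ[X]) :
    totalDerivCoeff (fun m => derivative^[s] (a m)) =
      fun m => derivative^[s] (totalDerivCoeff a m) := by
  funext m
  cases m <;>
    simp [totalDerivCoeff, prevCoeff, ← Function.iterate_succ_apply' derivative,
      Function.iterate_succ_apply, iterate_map_add]

noncomputable def gCoeff (i j m : ℕ) : ℝ :=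
  (-1) ^ (i - m) * (i.choose m : ℝ) *
    ((Nat.factorial (i + j - m - 1) : ℝ) /
      ((Nat.factorial (j - 1) : ℝ) * (Nat.factorial (i + j) : ℝ)))

lemma gfun_eq_linearInZ {r i : ℕ} (hi : i ≤ r + 1) (j : ℕ) :
    gfun r i j = linearInZ (r + 2) (fun m => monomial m (gCoeff i j m)) := by
  funext p
  set z : ℕ → ℝ := fun m => if h : m + 1 < r + 3 then p ⟨m + 1, h⟩ else 0
  have hz (m : Fin (r + 2)) : p m.succ = z m := by simp [z, Fin.succ]
  change ∑ m : Fin (i + 1), gCoeff i j m * p 0 ^ (m : ℕ) * z m =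
    ∑ m : Fin (r + 2), (monomial m (gCoeff i j m)).eval (p 0) * p m.succ
  simp only [hz, eval_monomial,
    Fin.sum_univ_eq_sum_range (fun m => gCoeff i j m * p 0 ^ m * z m)]
  refine Finset.sum_subset (by simpa using hi) fun m _ hm => ?_
  simp [gCoeff, Nat.choose_eq_zero_of_lt (by simpa using hm : i < m)]

lemma gs_eq_linearInZ {r i : ℕ} (hi : i ≤ r + 1) (j s : ℕ) :
    gs r i j s = linearInZ (r + 2) (fun m => derivative^[s] (monomial m (gCoeff i j m))) := by
  rw [gs, gfun_eq_linearInZ hi]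
  exact iterate_pderiv'_zero_linearInZ (r + 2) s _

-- The sign `-(-1) ^ (r + 1 - m)` (instead of `(-1) ^ (r - m)`) avoids truncated subtraction
-- in the exponent over the whole range `m ≤ r + 1`.
lemma gCoeff_two_mul_factorial {r m : ℕ} (hm : m ≤ r + 1) :
    gCoeff r 2 m * m.factorial * (r + 2).factorial =
      -(-1) ^ (r + 1 - m) * r.factorial * ((r + 1 - m : ℕ) : ℝ) := by
  rcases hm.lt_or_eq with hm | rfl
  · obtain ⟨k, rfl⟩ := Nat.exists_eq_add_of_le (Nat.le_of_lt_succ hm)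
    have hc : ((m + k).choose m : ℝ) * m.factorial * k.factorial = (m + k).factorial := by
      have := Nat.choose_mul_factorial_mul_factorial (Nat.le_add_right m k)
      rw [Nat.add_sub_cancel_left] at this
      exact_mod_cast this
    rw [gCoeff, show m + k + 2 - m - 1 = k + 1 by omega, show m + k - m = k by omega,
      show m + k + 1 - m = k + 1 by omega]
    field_simp
    push_cast [Nat.factorial_succ]
    linear_combination (-1) ^ k * (k + 1) * hc
  · simp [gCoeff]

lemma gCoeff_two_recurrence {r k : ℕ} (hk : k + 2 ≤ r + 1) :
    gCoeff r 2 (k + 2) * (k + 2) * (k + 1) + 2 * (gCoeff r 2 (k + 1) * (k + 1)) +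
      gCoeff r 2 k = 0 := by
  obtain ⟨j, hj⟩ := Nat.exists_eq_add_of_le hk
  have h2 := gCoeff_two_mul_factorial hk
  have h1 := gCoeff_two_mul_factorial (show k + 1 ≤ r + 1 by omega)
  have h0 := gCoeff_two_mul_factorial (show k ≤ r + 1 by omega)
  rw [hj, show k + 2 + j - (k + 2) = j by omega] at h2
  rw [hj, show k + 2 + j - (k + 1) = j + 1 by omega] at h1
  rw [hj, show k + 2 + j - k = j + 2 by omega] at h0
  have hpos : (0 : ℝ) < k.factorial * (r + 2).factorial := by positivity
  refine (mul_eq_zero_iff_right hpos.ne').mp ?_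
  push_cast [Nat.factorial_succ] at h2 h1 h0 ⊢
  linear_combination h2 + 2 * h1 + h0

lemma totalDerivCoeff_totalDerivCoeff_gCoeff_two_eq_zero {r m : ℕ} (hm : m ≤ r + 1) :
    totalDerivCoeff (totalDerivCoeff fun m => monomial m (gCoeff r 2 m)) m = 0 := by
  match m, hm with
  | 0, _ => simp [totalDerivCoeff, prevCoeff]
  | 1, _ => simp [totalDerivCoeff, prevCoeff]
  | k + 2, hk =>
    simp only [totalDerivCoeff, prevCoeff, derivative_add, derivative_monomial]
    rw [show k + 2 - 1 - 1 = k by omega, show k + 1 - 1 = k by omega, ← map_add, ← map_add,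
      ← map_add, monomial_eq_zero_iff, show k + 2 - 1 = k + 1 by omega]
    push_cast
    linear_combination gCoeff_two_recurrence hk

theorem stmt_2_general (r s : ℕ) :
    (∀ p : Fin (r+3) → ℝ, Dop r (Dop r (gs r r 2 s)) p = 0) ∧
    (∀ p : Fin (r+3) → ℝ, pderiv' (r+3) (r+2) (gs r r 2 s) p = 0) := by
  rw [gs_eq_linearInZ (Nat.le_succ r)]
  refine ⟨fun p => ?_, fun p => ?_⟩
  · rw [Dop_linearInZ, Dop_linearInZ, totalDerivCoeff_iterate_derivative,
      totalDerivCoeff_iterate_derivative, linearInZ_eq_zero]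
    · rfl
    · intro m hm
      rw [totalDerivCoeff_totalDerivCoeff_gCoeff_two_eq_zero (by omega), iterate_map_zero]
  · refine (pderiv'_succ_linearInZ (r + 2) _ (Fin.last (r + 1)) p).trans ?_
    simp [gCoeff]

/-- for `0 ≤ s ≤ r` the function `f = g_{r,2}^{(s)}` satisfies `D(Df) = 0` and
`∂f/∂z_{r+1} = 0` identically on `ℝ^{r+3}` (coordinate `r+2` is `z_{r+1}`); in particular
(the case `s = 0`) `D²(g_{r,2}) = 0`. -/
theorem stmt_2 (r s : ℕ) (hs : s ≤ r) :
    (∀ p : Fin (r+3) → ℝ, Dop r (Dop r (gs r r 2 s)) p = 0) ∧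
    (∀ p : Fin (r+3) → ℝ, pderiv' (r+3) (r+2) (gs r r 2 s) p = 0) :=
  stmt_2_general r s
end

section
/- Let r ≥ 0 and let f : ℝ^{r+3} → ℝ be smooth with D(Df) = 0 identically and ∂f/∂z_{r+1} = 0 identically. Then ∂²f/∂z_i∂z_j = 0 identically for all 0 ≤ i, j ≤ r+1; that is, f is an affine-linear function of the variables z_0, …, z_{r+1} (with coefficients depending on x). -/
open scoped BigOperators

/-!
Since `D` contains the term `z_{a+1} ∂/∂z_a`, the commutator `[∂/∂z_a, D]` is `∂/∂z_{a-1}`.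
Applying `∂²/∂z_a∂z_b` to `D²f = 0` and arguing by descending induction on `a + b` (the top
derivatives vanish because `∂f/∂z_{r+1} = 0`), the second derivatives `X a b` on the
antidiagonal `a + b = S` satisfy `X (a-2) b + 2 X (a-1) (b-1) + X a (b-2) = 0`. Hence
`(-1)^a X a (S - a)` is affine in `a`; it vanishes at both ends of the antidiagonal, so it
vanishes identically. Integrating along segments in the `z`-directions then shows that `f` is
affine-linear in `z`.
-/

open scoped ContDiff

theorem eq_zero_of_add_two_mul_add_eq_zero {w : ℤ → ℝ} {m n : ℤ} (hm : w m = 0) (hn : w n = 0)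
    (hrec : ∀ c, m ≤ c → c + 2 ≤ n → w c + 2 * w (c + 1) + w (c + 2) = 0)
    {t : ℤ} (hmt : m ≤ t) (htn : t ≤ n) : w t = 0 := by
  -- `(-1)^t w t` is affine in `t` and vanishes at `m`; `key` says this without the signs
  have key : ∀ t, m ≤ t → t + 1 ≤ n →
      ((t - m + 1 : ℤ) : ℝ) * w t + ((t - m : ℤ) : ℝ) * w (t + 1) = 0 := by
    intro t ht
    induction t, ht using Int.leInduction with
    | base => simp [hm]
    | succ t hmt ih =>
      intro htn
      have hI := ih (by omega)
      have hR := hrec t hmt (by omega)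
      rw [show t + 1 + 1 = t + 2 by ring]
      push_cast at hI ⊢
      linear_combination ((t : ℝ) - m + 1) * hR - hI
  induction t, htn using Int.leInductionDown with
  | base => exact hn
  | pred t htn ih =>
    have hpos : (0 : ℝ) < ((t - m : ℤ) : ℝ) := by exact_mod_cast (by omega : (0 : ℤ) < t - m)
    have hI := key (t - 1) hmt (by omega)
    rw [sub_add_cancel, ih (by omega), mul_zero, add_zero,
      show t - 1 - m + 1 = t - m by ring] at hI
    exact (mul_eq_zero.1 hI).resolve_left hpos.ne'

theorem Differentiable.apply_add_eq_of_fderiv_apply_eq {E : Type*} [NormedAddCommGroup E]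
    [NormedSpace ℝ E] {g : E → ℝ} (hg : Differentiable ℝ g) {x v : E} {C : ℝ}
    (hC : ∀ t : ℝ, fderiv ℝ g (x + t • v) v = C) : g (x + v) = g x + C := by
  have hderiv : ∀ t : ℝ, HasDerivAt (fun s : ℝ => g (x + s • v) - s * C) 0 t := by
    intro t
    have hline : HasDerivAt (fun s : ℝ => x + s • v) v t := by
      simpa using ((hasDerivAt_id t).smul_const v).const_add x
    have h := ((hg _).hasFDerivAt.comp_hasDerivAt t hline).sub (hasDerivAt_mul_const C)
    rw [hC t, sub_self] at h
    exact h
  have h := is_const_of_deriv_eq_zero (fun t => (hderiv t).differentiableAt)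
    (fun t => (hderiv t).deriv) 1 0
  simp only [one_smul, one_mul, zero_smul, add_zero, zero_mul, sub_zero] at h
  linarith

section PartialDerivative

variable {n k : ℕ} {g h : (Fin n → ℝ) → ℝ}

theorem pderiv'_of_le (g : (Fin n → ℝ) → ℝ) (hk : n ≤ k) : pderiv' n k g = 0 := by
  ext p
  simp [pderiv', show ¬k < n by omega]

theorem pderiv'_val_apply (i : Fin n) (g : (Fin n → ℝ) → ℝ) (p : Fin n → ℝ) :
    pderiv' n i g p = fderiv ℝ g p (Pi.single i 1) := by
  simp [pderiv']

@[simp]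
theorem pderiv'_zero : pderiv' n k (0 : (Fin n → ℝ) → ℝ) = 0 := by
  ext p
  simp [pderiv', fderiv_zero]

theorem pderiv'_add (hg : Differentiable ℝ g) (hh : Differentiable ℝ h) :
    pderiv' n k (g + h) = pderiv' n k g + pderiv' n k h := by
  ext p
  unfold pderiv'
  split_ifs <;> simp [fderiv_add (hg p) (hh p)]

theorem pderiv'_smul (hg : Differentiable ℝ g) (c : ℝ) :
    pderiv' n k (c • g) = c • pderiv' n k g := by
  ext p
  simp [pderiv', fderiv_const_smul (hg p)]

theorem pderiv'_sum {ι : Type*} (s : Finset ι) (G : ι → (Fin n → ℝ) → ℝ)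
    (hG : ∀ i ∈ s, Differentiable ℝ (G i)) :
    pderiv' n k (∑ i ∈ s, G i) = ∑ i ∈ s, pderiv' n k (G i) := by
  ext p
  simp [pderiv', fderiv_sum (fun i hi => hG i hi p)]

theorem pderiv'_coord_mul (hh : Differentiable ℝ h) (j : Fin n) :
    pderiv' n k ((fun q => q j) * h) =
      (if (j : ℕ) = k then h else 0) + (fun q => q j) * pderiv' n k h := by
  ext p
  have hj : DifferentiableAt ℝ (fun q : Fin n → ℝ => q j) p := (differentiable_apply j) p
  rcases lt_or_ge k n with hk | hk
  · obtain ⟨i, rfl⟩ : ∃ i : Fin n, (i : ℕ) = k := ⟨⟨k, hk⟩, rfl⟩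
    simp only [pderiv'_val_apply, fderiv_mul hj (hh p), Fin.val_inj]
    split_ifs with hji
    · simp [pderiv'_val_apply, fderiv_apply, hji]
      ring
    · simp [pderiv'_val_apply, fderiv_apply, hji]
  · simp [pderiv'_of_le _ hk, show (j : ℕ) ≠ k by omega]

theorem contDiff_pderiv' {s : WithTop ℕ∞} (hg : ContDiff ℝ (s + 1) g) (k : ℕ) :
    ContDiff ℝ s (pderiv' n k g) := by
  rcases lt_or_ge k n with hk | hk
  · obtain ⟨i, rfl⟩ : ∃ i : Fin n, (i : ℕ) = k := ⟨⟨k, hk⟩, rfl⟩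
    simp only [funext (pderiv'_val_apply i g)]
    exact (hg.fderiv_right le_rfl).clm_apply contDiff_const
  · rw [pderiv'_of_le _ hk]
    exact contDiff_const

theorem pderiv'_comm (hg : ContDiff ℝ 2 g) (k l : ℕ) :
    pderiv' n k (pderiv' n l g) = pderiv' n l (pderiv' n k g) := by
  rcases lt_or_ge k n with hk | hk
  · rcases lt_or_ge l n with hl | hl
    · obtain ⟨i, rfl⟩ : ∃ i : Fin n, (i : ℕ) = k := ⟨⟨k, hk⟩, rfl⟩
      obtain ⟨j, rfl⟩ : ∃ j : Fin n, (j : ℕ) = l := ⟨⟨l, hl⟩, rfl⟩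
      have hdiff : Differentiable ℝ (fderiv ℝ g) :=
        (hg.fderiv_right le_rfl).differentiable one_ne_zero
      ext p
      simp only [funext (pderiv'_val_apply _ g), pderiv'_val_apply]
      rw [fderiv_clm_apply (hdiff p) (differentiableAt_const _),
        fderiv_clm_apply (hdiff p) (differentiableAt_const _)]
      simpa using (hg.contDiffAt.isSymmSndFDerivAt (by simp)) (Pi.single i 1) (Pi.single j 1)
    · simp [pderiv'_of_le _ hl]
  · simp [pderiv'_of_le _ hk]

theorem fderiv_apply_eq_sum_pderiv' (g : (Fin n → ℝ) → ℝ) (p w : Fin n → ℝ) :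
    fderiv ℝ g p w = ∑ i, w i * pderiv' n i g p := by
  conv_lhs => rw [← Finset.univ_sum_single w, map_sum]
  refine Finset.sum_congr rfl fun i _ => ?_
  rw [pderiv'_val_apply, ← smul_eq_mul, ← map_smul, ← Pi.single_smul, smul_eq_mul, mul_one]

end PartialDerivative

theorem eq_apply_single_add_of_pderiv' {n : ℕ} {g : (Fin (n+1) → ℝ) → ℝ}
    (hg : Differentiable ℝ g) (c : Fin n → ℝ → ℝ)
    (hc : ∀ (m : Fin n) q, pderiv' (n+1) (m + 1) g q = c m (q 0)) (p : Fin (n+1) → ℝ) :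
    g p = g (Pi.single 0 (p 0)) + ∑ m, c m (p 0) * p m.succ := by
  set x : Fin (n+1) → ℝ := Pi.single 0 (p 0)
  have hp : x + (p - x) = p := add_sub_cancel x p
  rw [← hp]
  refine hg.apply_add_eq_of_fderiv_apply_eq fun t => ?_
  rw [fderiv_apply_eq_sum_pderiv', Fin.sum_univ_succ]
  simp [x, hc, Fin.succ_ne_zero, mul_comm]

theorem exists_eq_add_sum_mul_of_pderiv'_pderiv' {n : ℕ} {g : (Fin (n+1) → ℝ) → ℝ}
    (hg : ContDiff ℝ 2 g) (h : ∀ i j : ℕ, pderiv' (n+1) (i + 1) (pderiv' (n+1) (j + 1) g) = 0) :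
    ∃ (a : ℝ → ℝ) (c : Fin n → ℝ → ℝ), ∀ p, g p = a (p 0) + ∑ m, c m (p 0) * p m.succ := by
  set c : Fin n → ℝ → ℝ := fun m x => pderiv' (n+1) (m + 1) g (Pi.single 0 x)
  refine ⟨fun x => g (Pi.single 0 x), c, fun p =>
    eq_apply_single_add_of_pderiv' (hg.differentiable (by simp)) c (fun m q => ?_) p⟩
  -- `∂g/∂z_m` has vanishing `z`-derivatives, so it depends on `x` only
  have hdiff := (contDiff_pderiv' (s := 1) hg (m + 1)).differentiable one_ne_zero
  simpa [h] using eq_apply_single_add_of_pderiv' hdiff 0 (fun m' q' => by simp [h]) q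

section TotalDerivative

variable {r : ℕ} {g h : (Fin (r+3) → ℝ) → ℝ}

theorem Dop_eq (g : (Fin (r+3) → ℝ) → ℝ) :
    Dop r g = pderiv' (r+3) 0 g + ∑ m : Fin (r+1),
      (fun q => q ⟨m + 2, by omega⟩) * pderiv' (r+3) (m + 1) g := by
  ext p
  simp [Dop, Finset.sum_apply]

@[simp]
theorem Dop_zero : Dop r 0 = 0 := by
  ext p
  simp [Dop]

theorem contDiff_Dop (hg : ContDiff ℝ ∞ g) : ContDiff ℝ ∞ (Dop r g) := by
  unfold Dop
  exact (contDiff_pderiv' (s := ∞) hg 0).add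
    (ContDiff.sum fun m _ => (contDiff_apply ℝ ℝ _).mul (contDiff_pderiv' (s := ∞) hg _))

theorem Dop_add (hg : Differentiable ℝ g) (hh : Differentiable ℝ h) :
    Dop r (g + h) = Dop r g + Dop r h := by
  ext p
  simp only [Dop, pderiv'_add hg hh, Pi.add_apply, mul_add, Finset.sum_add_distrib]
  ring

/-- `∂/∂z_a`, extended by `0` to `a < 0` so that `[∂/∂z_a, D] = ∂/∂z_{a-1}` holds uniformly
for `a ≤ r + 1` (see `pderivZ_Dop`). -/
noncomputable def pderivZ (r : ℕ) (a : ℤ) (g : (Fin (r+3) → ℝ) → ℝ) : (Fin (r+3) → ℝ) → ℝ :=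
  if 0 ≤ a then pderiv' (r+3) (a.toNat + 1) g else 0

@[simp]
theorem pderivZ_natCast (k : ℕ) (g : (Fin (r+3) → ℝ) → ℝ) :
    pderivZ r k g = pderiv' (r+3) (k + 1) g := by
  simp [pderivZ]

theorem pderivZ_of_neg {a : ℤ} (ha : a < 0) (g : (Fin (r+3) → ℝ) → ℝ) : pderivZ r a g = 0 := by
  simp [pderivZ, not_le.2 ha]

theorem sum_ite_pderiv'_eq_pderivZ (g : (Fin (r+3) → ℝ) → ℝ) {k : ℕ} (hk : k ≤ r + 1) :
    (∑ m : Fin (r+1), if (m : ℕ) + 2 = k + 1 then pderiv' (r+3) (m + 1) g else 0)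
      = pderivZ r (k - 1) g := by
  rcases k with _ | j
  · simp [pderivZ_of_neg]
  · rw [Finset.sum_eq_single ⟨j, by omega⟩ (fun m _ hm => by simp [Fin.ext_iff] at hm ⊢; omega)
      (by simp)]
    simp

theorem pderivZ_Dop (hg : ContDiff ℝ ∞ g) {a : ℤ} (ha : a ≤ r + 1) :
    pderivZ r a (Dop r g) = Dop r (pderivZ r a g) + pderivZ r (a - 1) g := by
  cases a with
  | negSucc k => simp [pderivZ_of_neg (Int.negSucc_lt_zero _)]
  | ofNat k =>
    have hd := fun l => (contDiff_pderiv' (s := ∞) hg l).differentiable (by simp)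
    simp only [Int.ofNat_eq_natCast, pderivZ_natCast] at ha ⊢
    have hterm := fun m : Fin (r+1) => (differentiable_apply (⟨m + 2, by omega⟩ : Fin (r+3))).mul
      (hd (m + 1))
    rw [Dop_eq, pderiv'_add (hd 0) (Differentiable.sum fun m _ => hterm m),
      pderiv'_sum _ _ fun m _ => hterm m]
    simp only [fun m => pderiv'_coord_mul (k := k + 1) (hd m), Finset.sum_add_distrib]
    have hg2 : ContDiff ℝ 2 g := contDiff_infty.1 hg 2
    rw [sum_ite_pderiv'_eq_pderivZ g (by omega), Dop_eq, pderiv'_comm hg2]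
    simp only [pderiv'_comm hg2 (k + 1)]
    abel

@[simp]
theorem pderivZ_zero (a : ℤ) : pderivZ r a 0 = 0 := by
  simp [pderivZ]

theorem pderivZ_add (hg : Differentiable ℝ g) (hh : Differentiable ℝ h) (a : ℤ) :
    pderivZ r a (g + h) = pderivZ r a g + pderivZ r a h := by
  unfold pderivZ
  split_ifs <;> simp [pderiv'_add hg hh]

theorem pderivZ_smul (hg : Differentiable ℝ g) (c : ℝ) (a : ℤ) :
    pderivZ r a (c • g) = c • pderivZ r a g := by
  simp [pderivZ, pderiv'_smul hg]

theorem contDiff_pderivZ (hg : ContDiff ℝ ∞ g) (a : ℤ) : ContDiff ℝ ∞ (pderivZ r a g) := by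
  unfold pderivZ
  split_ifs
  · exact contDiff_pderiv' (s := ∞) hg _
  · exact contDiff_const

theorem pderivZ_comm (hg : ContDiff ℝ 2 g) (a b : ℤ) :
    pderivZ r a (pderivZ r b g) = pderivZ r b (pderivZ r a g) := by
  unfold pderivZ
  split_ifs <;> simp [pderiv'_comm hg]

theorem pderivZ_Dop_Dop (hg : ContDiff ℝ ∞ g) {a : ℤ} (ha : a ≤ r + 1) :
    pderivZ r a (Dop r (Dop r g)) =
      Dop r (Dop r (pderivZ r a g)) + (2 : ℝ) • Dop r (pderivZ r (a - 1) g)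
        + pderivZ r (a - 2) g := by
  have hd := fun {u : (Fin (r+3) → ℝ) → ℝ} (hu : ContDiff ℝ ∞ u) => hu.differentiable (by simp)
  rw [pderivZ_Dop (contDiff_Dop hg) ha, pderivZ_Dop hg ha, pderivZ_Dop hg (by omega),
    Dop_add (hd (contDiff_Dop (contDiff_pderivZ hg a))) (hd (contDiff_pderivZ hg _)),
    sub_sub, one_add_one_eq_two, two_smul]
  abel

end TotalDerivative

section SecondDerivatives

variable {r : ℕ} {f : (Fin (r+3) → ℝ) → ℝ}

theorem pderivZ_eq_zero_of_le (hz : pderiv' (r+3) (r+2) f = 0) {b : ℤ} (hb : r + 1 ≤ b) :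
    pderivZ r b f = 0 := by
  obtain ⟨k, rfl⟩ := Int.eq_ofNat_of_zero_le (by omega : 0 ≤ b)
  rcases (by omega : k = r + 1 ∨ r + 2 ≤ k) with rfl | hk
  · rw [pderivZ_natCast]
    exact hz
  · simpa using pderiv'_of_le f (by omega : r + 3 ≤ k + 1)

theorem pderivZ_pderivZ_eq_zero_of_le (hf : ContDiff ℝ 2 f) (hz : pderiv' (r+3) (r+2) f = 0)
    {a b : ℤ} (hab : r + 1 ≤ a ∨ r + 1 ≤ b) : pderivZ r a (pderivZ r b f) = 0 := by
  rcases hab with ha | hb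
  · rw [pderivZ_comm hf, pderivZ_eq_zero_of_le hz ha, pderivZ_zero]
  · rw [pderivZ_eq_zero_of_le hz hb, pderivZ_zero]

theorem pderivZ_pderivZ_recurrence (hf : ContDiff ℝ ∞ f) (hD : Dop r (Dop r f) = 0) {S : ℤ}
    (hS : ∀ a b, S < a + b → pderivZ r a (pderivZ r b f) = 0)
    {a b : ℤ} (ha : a ≤ r + 1) (hb : b ≤ r + 1) (hab : a + b = S + 2) :
    pderivZ r (a - 2) (pderivZ r b f) + (2 : ℝ) • pderivZ r (a - 1) (pderivZ r (b - 1) f)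
      + pderivZ r a (pderivZ r (b - 2) f) = 0 := by
  have hd := fun {u : (Fin (r+3) → ℝ) → ℝ} (hu : ContDiff ℝ ∞ u) => hu.differentiable (by simp)
  have hDD := hd (contDiff_Dop (contDiff_Dop (contDiff_pderivZ hf b)))
  have hD1 := hd (contDiff_Dop (contDiff_pderivZ hf (b - 1)))
  have h0 : pderivZ r a (pderivZ r b (Dop r (Dop r f))) = 0 := by simp [hD]
  rw [pderivZ_Dop_Dop hf hb,
    pderivZ_add (hDD.add (hD1.const_smul 2)) (hd (contDiff_pderivZ hf _)),
    pderivZ_add hDD (hD1.const_smul 2), pderivZ_smul hD1,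
    pderivZ_Dop_Dop (contDiff_pderivZ hf b) ha, pderivZ_Dop (contDiff_pderivZ hf _) ha,
    hS a b (by omega), hS (a - 1) b (by omega), hS a (b - 1) (by omega)] at h0
  simpa [add_assoc] using h0

theorem pderivZ_pderivZ_eq_zero_of_add_eq (hf : ContDiff ℝ ∞ f) (hD : Dop r (Dop r f) = 0)
    (hz : pderiv' (r+3) (r+2) f = 0) {S : ℤ}
    (hS : ∀ a b, S < a + b → pderivZ r a (pderivZ r b f) = 0)
    {a b : ℤ} (hab : a + b = S) : pderivZ r a (pderivZ r b f) = 0 := by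
  have hf2 : ContDiff ℝ 2 f := contDiff_infty.1 hf 2
  by_cases hbig : r + 1 ≤ a ∨ r + 1 ≤ b
  · exact pderivZ_pderivZ_eq_zero_of_le hf2 hz hbig
  ext p
  set w : ℤ → ℝ := fun t => pderivZ r t (pderivZ r (S - t) f) p
  have hw : ∀ t, S - r - 1 ≤ t → t ≤ r + 1 → w t = 0 := by
    intro t
    refine eq_zero_of_add_two_mul_add_eq_zero ?_ ?_ ?_
    · simp only [w, show S - (S - r - 1) = (r : ℤ) + 1 by ring,
        pderivZ_pderivZ_eq_zero_of_le hf2 hz (Or.inr le_rfl), Pi.zero_apply]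
    · simp only [w, pderivZ_pderivZ_eq_zero_of_le hf2 hz (Or.inl le_rfl), Pi.zero_apply]
    · intro c hc hcn
      have h := congrFun (pderivZ_pderivZ_recurrence hf hD hS (a := c + 2) (b := S - c)
        (by omega) (by omega) (by ring)) p
      rw [show c + 2 - 2 = c by ring, show c + 2 - 1 = c + 1 by ring,
        show S - c - 1 = S - (c + 1) by ring, show S - c - 2 = S - (c + 2) by ring] at h
      simpa [w] using h
  simpa [w, show S - a = b by omega] using hw a (by omega) (by omega)

theorem pderivZ_pderivZ_eq_zero (hf : ContDiff ℝ ∞ f) (hD : Dop r (Dop r f) = 0)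
    (hz : pderiv' (r+3) (r+2) f = 0) (a b : ℤ) : pderivZ r a (pderivZ r b f) = 0 := by
  have key : ∀ S ≤ 2 * (r : ℤ), ∀ a b, S < a + b → pderivZ r a (pderivZ r b f) = 0 := by
    intro S hS
    induction S, hS using Int.leInductionDown with
    | base =>
      exact fun a b hab => pderivZ_pderivZ_eq_zero_of_le (contDiff_infty.1 hf 2) hz (by omega)
    | pred S _ ih =>
      intro a b hab
      rcases (by omega : S < a + b ∨ a + b = S) with hlt | heq
      · exact ih a b hlt
      · exact pderivZ_pderivZ_eq_zero_of_add_eq hf hD hz ih heq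
  exact key (min (a + b - 1) (2 * r)) (min_le_right _ _) a b (by omega)

end SecondDerivatives

/-- if the smooth `f` satisfies `D(Df) = 0` and `∂f/∂z_{r+1} = 0`, then
`∂²f/∂z_i∂z_j = 0` for all `0 ≤ i, j ≤ r+1`; that is, `f` is an affine-linear function of
`z_0, …, z_{r+1}` with coefficients depending on `x`.  (Coordinate `m+1` is `z_m`.) -/
theorem stmt_8 (r : ℕ) (f : (Fin (r+3) → ℝ) → ℝ) (hf : ContDiff ℝ (⊤ : ℕ∞) f)
    (hD : ∀ p, Dop r (Dop r f) p = 0)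
    (hz : ∀ p, pderiv' (r+3) (r+2) f p = 0) :
    (∀ i ≤ r + 1, ∀ j ≤ r + 1, ∀ p,
      pderiv' (r+3) (i+1) (pderiv' (r+3) (j+1) f) p = 0) ∧
    (∃ (a : ℝ → ℝ) (c : Fin (r+2) → ℝ → ℝ), ∀ p : Fin (r+3) → ℝ,
      f p = a (p 0) + ∑ m : Fin (r+2),
        c m (p 0) * p ⟨m.val + 1, by have := m.isLt; omega⟩) := by
  have hsecond : ∀ i j : ℕ, pderiv' (r+3) (i + 1) (pderiv' (r+3) (j + 1) f) = 0 := fun i j => by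
    simpa using pderivZ_pderivZ_eq_zero hf (funext hD) (funext hz) i j
  exact ⟨fun i _ j _ p => congrFun (hsecond i j) p,
    exists_eq_add_sum_mul_of_pderiv'_pderiv' (contDiff_infty.1 hf 2) hsecond⟩
end

section
/- Fix an integer l ≥ 3. On ℝ³ (coordinates x, y, z), let A be the span of x^i y^j ∂z over all integers i, j ≥ 0 with i + j ≤ l−1, and let G be the span of the nine fields ∂x, ∂y, x∂x, x∂y, y∂x, y∂y, z∂z, x²∂x + xy∂y + (l−1)xz∂z, xy∂x + y²∂y + (l−1)yz∂z. Then A is an abelian ideal of the span G + A: the Lie bracket of any two elements of A is zero, and the Lie bracket of any element of G with any element of A lies in A. -/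
/-!
Every element of `A` has the form `f(x, y) ∂z`: all of them are parallel to `∂z` and constant
along it, so `D W (V p)` and `D V (W p)` both vanish and `A` is abelian. Every generator `V` of `G`
is affine in `z`, with `∂V/∂z = c ∂z`, so `[V, xⁱ yʲ ∂z] = (V(xⁱ yʲ) − c xⁱ yʲ) ∂z` is a multiple
of a single monomial field. The seven generators of degree at most one keep the degree `i + j` or
lower it; the two quadratic ones raise it by one, but with the coefficient `i + j − (l − 1)`,
which vanishes in the top degree `l − 1`. Since the bracket is bilinear on differentiable fields,
this passes to the spans.
-/

open scoped BigOperators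

/-- The nine vector fields `∂x, ∂y, x∂x, x∂y, y∂x, y∂y, z∂z,
x²∂x + xy∂y + (l−1)xz∂z, xy∂x + y²∂y + (l−1)yz∂z` on `ℝ³` (coordinates `x, y, z`). -/
noncomputable def nineFields (l : ℕ) : Fin 9 → ((Fin 3 → ℝ) → (Fin 3 → ℝ)) :=
  ![fun _ => ![1, 0, 0],
    fun _ => ![0, 1, 0],
    fun p => ![p 0, 0, 0],
    fun p => ![0, p 0, 0],
    fun p => ![p 1, 0, 0],
    fun p => ![0, p 1, 0],
    fun p => ![0, 0, p 2],
    fun p => ![(p 0)^2, p 0 * p 1, ((l : ℝ) - 1) * (p 0 * p 2)],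
    fun p => ![p 0 * p 1, (p 1)^2, ((l : ℝ) - 1) * (p 1 * p 2)]]

/-- The span `A` of the fields `xⁱ yʲ ∂z`, `i + j ≤ l − 1`, on `ℝ³`. -/
noncomputable def spanA (l : ℕ) : Submodule ℝ ((Fin 3 → ℝ) → (Fin 3 → ℝ)) :=
  Submodule.span ℝ
    {V | ∃ i j : ℕ, i + j ≤ l - 1 ∧ V = fun p => ![0, 0, (p 0) ^ i * (p 1) ^ j]}

/-- The span `G` of the nine fields above. -/
noncomputable def spanG (l : ℕ) : Submodule ℝ ((Fin 3 → ℝ) → (Fin 3 → ℝ)) :=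
  Submodule.span ℝ (Set.range (nineFields l))

section

variable {𝕜 : Type*} [NontriviallyNormedField 𝕜] {E F : Type*} [NormedAddCommGroup E]
  [NormedSpace 𝕜 E] [NormedAddCommGroup F] [NormedSpace 𝕜 F]

theorem differentiable_of_mem_span {s : Set (E → F)} (hs : ∀ f ∈ s, Differentiable 𝕜 f)
    {f : E → F} (hf : f ∈ Submodule.span 𝕜 s) : Differentiable 𝕜 f := by
  induction hf using Submodule.span_induction with
  | mem f hf => exact hs f hf
  | zero => exact differentiable_const 0
  | add f g _ _ hf hg => exact hf.add hg
  | smul c f _ hf => exact hf.const_smul c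

theorem fderiv_apply_eq_of_forall_add_smul {f : E → F} {x v : E} {u : F}
    (hf : DifferentiableAt 𝕜 f x) (h : ∀ t : 𝕜, f (x + t • v) = f x + t • u) :
    fderiv 𝕜 f x v = u := by
  rw [← hf.lineDeriv_eq_fderiv, lineDeriv, funext h, deriv_const_add]
  simpa using ((hasDerivAt_id (0 : 𝕜)).smul_const u).deriv

namespace VectorField

theorem lieBracket_smul_const_right_apply {V : E → E} {f : E → 𝕜} {x : E}
    (hf : DifferentiableAt 𝕜 f x) (e : E) :
    lieBracket 𝕜 V (fun y ↦ f y • e) x =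
      fderiv 𝕜 f x (V x) • e - f x • fderiv 𝕜 V x e := by
  simp [lieBracket, fderiv_smul_const hf]

theorem lieBracket_mem_of_mem_span {s t : Set (E → E)} {M : Submodule 𝕜 (E → E)}
    (hs : ∀ V ∈ s, Differentiable 𝕜 V) (ht : ∀ W ∈ t, Differentiable 𝕜 W)
    (h : ∀ V ∈ s, ∀ W ∈ t, lieBracket 𝕜 V W ∈ M) {V W : E → E}
    (hV : V ∈ Submodule.span 𝕜 s) (hW : W ∈ Submodule.span 𝕜 t) :
    lieBracket 𝕜 V W ∈ M := by
  induction hV, hW using Submodule.span_induction₂ with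
  | mem_mem V W hV hW => exact h V hV W hW
  | zero_left => simp
  | zero_right => simp
  | add_left V₁ V₂ W hV₁ hV₂ _ h₁ h₂ =>
    have hadd : lieBracket 𝕜 (V₁ + V₂) W = lieBracket 𝕜 V₁ W + lieBracket 𝕜 V₂ W :=
      funext fun x ↦ lieBracket_add_left (differentiable_of_mem_span hs hV₁ x)
        (differentiable_of_mem_span hs hV₂ x)
    exact hadd ▸ M.add_mem h₁ h₂
  | add_right V W₁ W₂ _ hW₁ hW₂ h₁ h₂ =>
    have hadd : lieBracket 𝕜 V (W₁ + W₂) = lieBracket 𝕜 V W₁ + lieBracket 𝕜 V W₂ :=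
      funext fun x ↦ lieBracket_add_right (differentiable_of_mem_span ht hW₁ x)
        (differentiable_of_mem_span ht hW₂ x)
    exact hadd ▸ M.add_mem h₁ h₂
  | smul_left c V W hV _ h =>
    have hsmul : lieBracket 𝕜 (c • V) W = c • lieBracket 𝕜 V W :=
      funext fun x ↦ lieBracket_const_smul_left (differentiable_of_mem_span hs hV x)
    exact hsmul ▸ M.smul_mem c h
  | smul_right c V W _ hW h =>
    have hsmul : lieBracket 𝕜 V (c • W) = c • lieBracket 𝕜 V W :=
      funext fun x ↦ lieBracket_const_smul_right (differentiable_of_mem_span ht hW x)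
    exact hsmul ▸ M.smul_mem c h

variable (𝕜) in
/-- Vector fields `f • e` with `f` constant along `e`; for `e = ∂z` these are the fields
`f(x, y) ∂z`. -/
def invariantFieldsAlong (e : E) : Submodule 𝕜 (E → E) where
  carrier := {V | Differentiable 𝕜 V ∧ ∀ x, V x ∈ 𝕜 ∙ e ∧ fderiv 𝕜 V x e = 0}
  zero_mem' := ⟨differentiable_const 0, fun x ↦ by simp⟩
  add_mem' := by
    rintro V W ⟨hV, hV'⟩ ⟨hW, hW'⟩
    refine ⟨hV.add hW, fun x ↦ ⟨Submodule.add_mem _ (hV' x).1 (hW' x).1, ?_⟩⟩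
    rw [fderiv_add (hV x) (hW x)]
    simp [(hV' x).2, (hW' x).2]
  smul_mem' := by
    rintro c V ⟨hV, hV'⟩
    refine ⟨hV.const_smul c, fun x ↦ ⟨Submodule.smul_mem _ c (hV' x).1, ?_⟩⟩
    rw [fderiv_const_smul (hV x)]
    simp [(hV' x).2]

theorem lieBracket_eq_zero_of_mem_invariantFieldsAlong {e : E} {V W : E → E}
    (hV : V ∈ invariantFieldsAlong 𝕜 e) (hW : W ∈ invariantFieldsAlong 𝕜 e) :
    lieBracket 𝕜 V W = 0 := by
  funext x
  obtain ⟨a, ha⟩ := Submodule.mem_span_singleton.1 (hV.2 x).1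
  obtain ⟨b, hb⟩ := Submodule.mem_span_singleton.1 (hW.2 x).1
  simp [lieBracket, ← ha, ← hb, (hV.2 x).2, (hW.2 x).2]

end VectorField

end

open VectorField

local notation "ℝ³" => Fin 3 → ℝ

noncomputable def zMonomial (i j : ℕ) : ℝ³ → ℝ³ := fun p ↦ ![0, 0, p 0 ^ i * p 1 ^ j]

theorem zMonomial_eq_smul (i j : ℕ) :
    zMonomial i j = fun p ↦ (p 0 ^ i * p 1 ^ j) • ![0, 0, 1] := by
  funext p m
  fin_cases m <;> simp [zMonomial]

theorem fderiv_monomial_apply (i j : ℕ) (p v : ℝ³) :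
    fderiv ℝ (fun q : ℝ³ ↦ q 0 ^ i * q 1 ^ j) p v =
      i * p 0 ^ (i - 1) * p 1 ^ j * v 0 + j * p 0 ^ i * p 1 ^ (j - 1) * v 1 := by
  have hx : HasFDerivAt (fun q : ℝ³ ↦ q 0 ^ i) ((i * p 0 ^ (i - 1)) • .proj 0) p :=
    (hasDerivAt_pow i (p 0)).comp_hasFDerivAt p (hasFDerivAt_apply (𝕜 := ℝ) (F' := fun _ ↦ ℝ) 0 p)
  have hy : HasFDerivAt (fun q : ℝ³ ↦ q 1 ^ j) ((j * p 1 ^ (j - 1)) • .proj 1) p :=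
    (hasDerivAt_pow j (p 1)).comp_hasFDerivAt p (hasFDerivAt_apply (𝕜 := ℝ) (F' := fun _ ↦ ℝ) 1 p)
  rw [(hx.fun_mul hy).fderiv]
  simp
  ring

theorem differentiable_nineFields (l : ℕ) (k : Fin 9) : Differentiable ℝ (nineFields l k) := by
  refine differentiable_pi'' fun m ↦ ?_
  fin_cases k <;> fin_cases m <;> simp [nineFields] <;> fun_prop

theorem differentiable_zMonomial (i j : ℕ) : Differentiable ℝ (zMonomial i j) := by
  rw [zMonomial_eq_smul]
  fun_prop

theorem zMonomial_mem_invariantFieldsAlong (i j : ℕ) :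
    zMonomial i j ∈ invariantFieldsAlong ℝ ![0, 0, 1] := by
  refine ⟨differentiable_zMonomial i j, fun p ↦ ⟨?_, ?_⟩⟩
  · rw [zMonomial_eq_smul]
    exact Submodule.smul_mem _ _ (Submodule.mem_span_singleton_self _)
  · rw [zMonomial_eq_smul, fderiv_smul_const (by fun_prop), ContinuousLinearMap.smulRight_apply,
      fderiv_monomial_apply]
    simp

theorem spanA_le_invariantFieldsAlong (l : ℕ) : spanA l ≤ invariantFieldsAlong ℝ ![0, 0, 1] :=
  Submodule.span_le.2 <| by
    rintro _ ⟨i, j, -, rfl⟩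
    exact zMonomial_mem_invariantFieldsAlong i j

theorem smul_zMonomial_mem_spanA {l i j : ℕ} {c : ℝ} (h : c ≠ 0 → i + j ≤ l - 1) :
    c • zMonomial i j ∈ spanA l := by
  by_cases hc : c = 0
  · simp [hc]
  · exact Submodule.smul_mem _ c (Submodule.subset_span ⟨i, j, h hc, rfl⟩)

theorem lieBracket_zMonomial_eq_smul {V : ℝ³ → ℝ³} (hV : Differentiable ℝ V) {c : ℝ³ → ℝ}
    (hz : ∀ p (t : ℝ), V (p + t • ![0, 0, 1]) = V p + t • ![0, 0, c p])
    {i j i' j' : ℕ} {κ : ℝ}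
    (h : ∀ p : ℝ³, i * p 0 ^ (i - 1) * p 1 ^ j * V p 0 + j * p 0 ^ i * p 1 ^ (j - 1) * V p 1
      - c p * (p 0 ^ i * p 1 ^ j) = κ * (p 0 ^ i' * p 1 ^ j')) :
    lieBracket ℝ V (zMonomial i j) = κ • zMonomial i' j' := by
  ext p m
  rw [zMonomial_eq_smul, lieBracket_smul_const_right_apply (by fun_prop), fderiv_monomial_apply,
    fderiv_apply_eq_of_forall_add_smul (hV p) (hz p)]
  fin_cases m <;> simp [zMonomial]
  linear_combination h p

section nineFields

variable (l i j : ℕ)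

theorem lieBracket_dx_zMonomial :
    lieBracket ℝ (nineFields l 0) (zMonomial i j) = (i : ℝ) • zMonomial (i - 1) j :=
  lieBracket_zMonomial_eq_smul (differentiable_nineFields l 0) (c := 0)
    (fun p t ↦ by ext m; fin_cases m <;> simp [nineFields, Matrix.vecHead, Matrix.vecTail])
    fun p ↦ by simp [nineFields]; ring

theorem lieBracket_dy_zMonomial :
    lieBracket ℝ (nineFields l 1) (zMonomial i j) = (j : ℝ) • zMonomial i (j - 1) :=
  lieBracket_zMonomial_eq_smul (differentiable_nineFields l 1) (c := 0)
    (fun p t ↦ by ext m; fin_cases m <;> simp [nineFields, Matrix.vecHead, Matrix.vecTail])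
    fun p ↦ by simp [nineFields]; ring

theorem lieBracket_xdx_zMonomial :
    lieBracket ℝ (nineFields l 2) (zMonomial i j) = (i : ℝ) • zMonomial i j :=
  lieBracket_zMonomial_eq_smul (differentiable_nineFields l 2) (c := 0)
    (fun p t ↦ by ext m; fin_cases m <;> simp [nineFields, Matrix.vecHead, Matrix.vecTail])
    fun p ↦ by rcases i with _ | i <;> simp [nineFields, pow_succ]; ring

theorem lieBracket_xdy_zMonomial :
    lieBracket ℝ (nineFields l 3) (zMonomial i j) = (j : ℝ) • zMonomial (i + 1) (j - 1) :=
  lieBracket_zMonomial_eq_smul (differentiable_nineFields l 3) (c := 0)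
    (fun p t ↦ by ext m; fin_cases m <;> simp [nineFields, Matrix.vecHead, Matrix.vecTail])
    fun p ↦ by simp [nineFields]; ring

theorem lieBracket_ydx_zMonomial :
    lieBracket ℝ (nineFields l 4) (zMonomial i j) = (i : ℝ) • zMonomial (i - 1) (j + 1) :=
  lieBracket_zMonomial_eq_smul (differentiable_nineFields l 4) (c := 0)
    (fun p t ↦ by ext m; fin_cases m <;> simp [nineFields, Matrix.vecHead, Matrix.vecTail])
    fun p ↦ by simp [nineFields]; ring

theorem lieBracket_ydy_zMonomial :
    lieBracket ℝ (nineFields l 5) (zMonomial i j) = (j : ℝ) • zMonomial i j :=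
  lieBracket_zMonomial_eq_smul (differentiable_nineFields l 5) (c := 0)
    (fun p t ↦ by ext m; fin_cases m <;> simp [nineFields, Matrix.vecHead, Matrix.vecTail])
    fun p ↦ by rcases j with _ | j <;> simp [nineFields, pow_succ]; ring

theorem lieBracket_zdz_zMonomial :
    lieBracket ℝ (nineFields l 6) (zMonomial i j) = (-1 : ℝ) • zMonomial i j :=
  lieBracket_zMonomial_eq_smul (differentiable_nineFields l 6) (c := 1)
    (fun p t ↦ by ext m; fin_cases m <;> simp [nineFields, Matrix.vecHead, Matrix.vecTail])
    fun p ↦ by simp [nineFields]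

theorem lieBracket_xEuler_zMonomial :
    lieBracket ℝ (nineFields l 7) (zMonomial i j) =
      ((i + j : ℝ) - (l - 1)) • zMonomial (i + 1) j :=
  lieBracket_zMonomial_eq_smul (differentiable_nineFields l 7) (c := fun p ↦ (l - 1) * p 0)
    (fun p t ↦ by ext m; fin_cases m <;> simp [nineFields, Matrix.vecHead, Matrix.vecTail]; ring)
    fun p ↦ by
      rcases i with _ | i <;> rcases j with _ | j <;> simp [nineFields, pow_succ] <;> ring

theorem lieBracket_yEuler_zMonomial :
    lieBracket ℝ (nineFields l 8) (zMonomial i j) =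
      ((i + j : ℝ) - (l - 1)) • zMonomial i (j + 1) :=
  lieBracket_zMonomial_eq_smul (differentiable_nineFields l 8) (c := fun p ↦ (l - 1) * p 1)
    (fun p t ↦ by ext m; fin_cases m <;> simp [nineFields, Matrix.vecHead, Matrix.vecTail]; ring)
    fun p ↦ by
      rcases i with _ | i <;> rcases j with _ | j <;> simp [nineFields, pow_succ] <;> ring

end nineFields

theorem lieBracket_nineFields_zMonomial_mem_spanA {l i j : ℕ} (hl : 1 ≤ l)
    (hij : i + j ≤ l - 1) (k : Fin 9) :
    lieBracket ℝ (nineFields l k) (zMonomial i j) ∈ spanA l := by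
  have hj : (j : ℝ) ≠ 0 → i + 1 + (j - 1) ≤ l - 1 := fun h ↦ by
    have : j ≠ 0 := by rintro rfl; simp at h
    omega
  have hi : (i : ℝ) ≠ 0 → i - 1 + (j + 1) ≤ l - 1 := fun h ↦ by
    have : i ≠ 0 := by rintro rfl; simp at h
    omega
  have top : (i + j : ℝ) - (l - 1) ≠ 0 → i + 1 + j ≤ l - 1 := fun h ↦ by
    contrapose! h
    rw [show l = i + j + 1 by omega]
    push_cast
    ring
  fin_cases k
  · exact lieBracket_dx_zMonomial l i j ▸ smul_zMonomial_mem_spanA fun _ ↦ by omega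
  · exact lieBracket_dy_zMonomial l i j ▸ smul_zMonomial_mem_spanA fun _ ↦ by omega
  · exact lieBracket_xdx_zMonomial l i j ▸ smul_zMonomial_mem_spanA fun _ ↦ hij
  · exact lieBracket_xdy_zMonomial l i j ▸ smul_zMonomial_mem_spanA hj
  · exact lieBracket_ydx_zMonomial l i j ▸ smul_zMonomial_mem_spanA hi
  · exact lieBracket_ydy_zMonomial l i j ▸ smul_zMonomial_mem_spanA fun _ ↦ hij
  · exact lieBracket_zdz_zMonomial l i j ▸ smul_zMonomial_mem_spanA fun _ ↦ hij
  · exact lieBracket_xEuler_zMonomial l i j ▸ smul_zMonomial_mem_spanA top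
  · exact lieBracket_yEuler_zMonomial l i j ▸ smul_zMonomial_mem_spanA fun h ↦ by
      linarith [top h]

/-- `A` is an abelian ideal of `G + A`: brackets of elements of `A` vanish and
the bracket of an element of `G` with an element of `A` lies in `A`. -/
theorem stmt_11 (l : ℕ) (hl : 3 ≤ l) :
    (∀ V ∈ spanA l, ∀ W ∈ spanA l, VectorField.lieBracket ℝ V W = 0) ∧
    (∀ V ∈ spanG l, ∀ W ∈ spanA l, VectorField.lieBracket ℝ V W ∈ spanA l) := by
  refine ⟨fun V hV W hW ↦ lieBracket_eq_zero_of_mem_invariantFieldsAlong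
    (spanA_le_invariantFieldsAlong l hV) (spanA_le_invariantFieldsAlong l hW),
    fun V hV W hW ↦ lieBracket_mem_of_mem_span ?_ ?_ ?_ hV hW⟩
  · rintro _ ⟨k, rfl⟩
    exact differentiable_nineFields l k
  · rintro _ ⟨i, j, -, rfl⟩
    exact differentiable_zMonomial i j
  · rintro _ ⟨k, rfl⟩ _ ⟨i, j, hij, rfl⟩
    exact lieBracket_nineFields_zMonomial_mem_spanA (by omega) hij k
end

section
/- Fix an integer l ≥ 3. There exists an injective ℝ-linear map φ from the space of real 3×3 matrices to the space of smooth maps ℝ³ → ℝ³ such that φ(AB − BA) = [φ(A), φ(B)] (Lie bracket of vector fields) for all 3×3 matrices A, B, and such that the range of φ equals the span of the nine vector fields ∂x, ∂y, x∂x, x∂y, y∂x, y∂y, z∂z, x²∂x + xy∂y + (l−1)xz∂z, xy∂x + y²∂y + (l−1)yz∂z on ℝ³ (coordinates x, y, z). In particular this nine-dimensional span is a Lie algebra isomorphic to gl(3,ℝ). -/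
open scoped BigOperators

/-!
`φ(A)` is the infinitesimal action of `A` on the affine chart `(x, y) ↦ [x : y : 1]` of the
projective plane, lifted to a line bundle whose fibre coordinate `z` has weight `t = l - 1`.
With `c = (x, y, 1)`, `λ_A = (A c)₂` and `P` the projection forgetting `z`, the base part satisfies
`P φ(A) = λ_A c - A c`; with this identity `[φ(A), φ(B)]` collapses to `φ(AB - BA)` by linear
algebra alone. The `z`-component `t z λ_A` recovers the last row of `A` when `t ≠ 0`, after which
the base part recovers the rest. The coefficients of `φ(A)` in the nine fields are an invertible
linear function of `A`, so the range of `φ` is their span.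
-/

open Matrix Function

lemma Matrix.eq_zero_of_forall_apply_eq_one_mulVec_eq_zero {α m ι : Type*} [Ring α] [Fintype ι]
    [DecidableEq ι] {A : Matrix m ι α} (o : ι) (h : ∀ v : ι → α, v o = 1 → A *ᵥ v = 0) :
    A = 0 := by
  have ho : A *ᵥ Pi.single o 1 = 0 := h _ (by simp)
  refine ext_of_mulVec_single fun j => ?_
  rw [zero_mulVec]
  rcases eq_or_ne j o with rfl | hj
  · exact ho
  · have := h (Pi.single o 1 + Pi.single j 1) (by simp [hj.symm])
    rwa [mulVec_add, ho, zero_add] at this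

namespace GLVectorField

section Algebra

variable {R ι : Type*} [CommRing R] [Fintype ι] [DecidableEq ι] (o : ι)

def baseProj : Matrix ι ι R := diagonal (update 1 o 0)

def fiberScale (t : R) : Matrix ι ι R := diagonal (update 1 o t)

def affineChart (p : ι → R) : ι → R := baseProj o *ᵥ p + Pi.single o 1

/-- Coordinate `o` is the fibre coordinate; the others are affine coordinates on projective space. -/
def glField (t : R) (A : Matrix ι ι R) (p : ι → R) : ι → R :=
  (A *ᵥ affineChart o p) o • (fiberScale o t *ᵥ p) - baseProj o *ᵥ (A *ᵥ affineChart o p)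

def glFieldₗ (t : R) : Matrix ι ι R →ₗ[R] (ι → R) → ι → R where
  toFun := glField o t
  map_add' A B := by
    ext1 p
    simp only [glField, add_mulVec, Pi.add_apply, add_smul, mulVec_add]
    abel
  map_smul' c A := by
    ext1 p
    simp only [glField, smul_mulVec, mulVec_smul, Pi.smul_apply, smul_eq_mul, mul_smul, smul_sub,
      RingHom.id_apply]

variable {o}

lemma baseProj_mulVec (v : ι → R) : baseProj o *ᵥ v = v - v o • Pi.single o 1 := by
  ext i
  rcases eq_or_ne i o with rfl | hi <;> simp [baseProj, mulVec_diagonal, *]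

lemma baseProj_mulVec_baseProj_mulVec (v : ι → R) :
    baseProj o *ᵥ (baseProj o *ᵥ v) = baseProj o *ᵥ v := by
  ext i
  rcases eq_or_ne i o with rfl | hi <;> simp [baseProj, mulVec_diagonal, *]

lemma baseProj_mulVec_fiberScale_mulVec (t : R) (v : ι → R) :
    baseProj o *ᵥ (fiberScale o t *ᵥ v) = baseProj o *ᵥ v := by
  ext i
  rcases eq_or_ne i o with rfl | hi <;> simp [baseProj, fiberScale, mulVec_diagonal, *]

lemma fiberScale_mulVec_baseProj_mulVec (t : R) (v : ι → R) :
    fiberScale o t *ᵥ (baseProj o *ᵥ v) = baseProj o *ᵥ v := by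
  ext i
  rcases eq_or_ne i o with rfl | hi <;> simp [baseProj, fiberScale, mulVec_diagonal, *]

lemma affineChart_of_apply_eq_one {p : ι → R} (hp : p o = 1) : affineChart o p = p := by
  simp [affineChart, baseProj_mulVec, hp]

lemma glField_apply_self (t : R) (A : Matrix ι ι R) (p : ι → R) :
    glField o t A p o = (A *ᵥ affineChart o p) o * (t * p o) := by
  simp [glField, baseProj, fiberScale, mulVec_diagonal, -mulVec_mulVec]

lemma baseProj_mulVec_glField (t : R) (A : Matrix ι ι R) (p : ι → R) :
    baseProj o *ᵥ glField o t A p =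
      (A *ᵥ affineChart o p) o • affineChart o p - A *ᵥ affineChart o p := by
  have hp : baseProj o *ᵥ p = affineChart o p - Pi.single o 1 := by simp [affineChart]
  rw [glField, mulVec_sub, mulVec_smul, baseProj_mulVec_fiberScale_mulVec,
    baseProj_mulVec_baseProj_mulVec, hp, baseProj_mulVec (A *ᵥ _)]
  module

lemma fiberScale_mulVec_glField (t : R) (A : Matrix ι ι R) (p : ι → R) :
    fiberScale o t *ᵥ glField o t A p =
      (A *ᵥ affineChart o p) o • (fiberScale o t *ᵥ (fiberScale o t *ᵥ p))
        - baseProj o *ᵥ (A *ᵥ affineChart o p) := by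
  simp only [glField, mulVec_sub, mulVec_smul, fiberScale_mulVec_baseProj_mulVec]

lemma glFieldₗ_injective [IsDomain R] {t : R} (ht : t ≠ 0) : Injective (glFieldₗ o t) := by
  refine (injective_iff_map_eq_zero _).mpr fun A hA => ?_
  refine eq_zero_of_forall_apply_eq_one_mulVec_eq_zero o fun c hc => ?_
  have hzero : glField o t A c = 0 := congrFun hA c
  have hlam : (A *ᵥ c) o = 0 := by
    simpa [glField_apply_self, affineChart_of_apply_eq_one hc, hc, ht] using congrFun hzero o
  simpa [hzero, affineChart_of_apply_eq_one hc, hlam] using baseProj_mulVec_glField (o := o) t A c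

end Algebra

section Calculus

variable {𝕜 ι : Type*} [NontriviallyNormedField 𝕜] [CompleteSpace 𝕜] [Fintype ι] [DecidableEq ι]
  {o : ι}

lemma fderiv_glField_apply (t : 𝕜) (A : Matrix ι ι 𝕜) (p v : ι → 𝕜) :
    fderiv 𝕜 (glField o t A) p v =
      (A *ᵥ affineChart o p) o • (fiberScale o t *ᵥ v)
        + (A *ᵥ (baseProj o *ᵥ v)) o • (fiberScale o t *ᵥ p)
        - baseProj o *ᵥ (A *ᵥ (baseProj o *ᵥ v)) := by
  let L (M : Matrix ι ι 𝕜) : (ι → 𝕜) →L[𝕜] (ι → 𝕜) := (mulVecLin M).toContinuousLinearMap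
  have hchart : HasFDerivAt (affineChart o) (L (baseProj o)) p :=
    (L _).hasFDerivAt.add_const _
  have hu : HasFDerivAt (fun p => A *ᵥ affineChart o p) ((L A).comp (L (baseProj o))) p :=
    (L A).hasFDerivAt.comp p hchart
  have hlam := (hasFDerivAt_apply o _).comp p hu
  have h : HasFDerivAt (glField o t A) _ p :=
    (hlam.smul (L (fiberScale o t)).hasFDerivAt).sub ((L (baseProj o)).hasFDerivAt.comp p hu)
  simp [h.fderiv, L]

lemma glField_commutator (t : 𝕜) (A B : Matrix ι ι 𝕜) :
    glField o t (A * B - B * A) = VectorField.lieBracket 𝕜 (glField o t A) (glField o t B) := by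
  ext1 p
  rw [VectorField.lieBracket, fderiv_glField_apply, fderiv_glField_apply,
    baseProj_mulVec_glField, baseProj_mulVec_glField, fiberScale_mulVec_glField,
    fiberScale_mulVec_glField, glField]
  simp only [sub_mulVec, ← mulVec_mulVec, mulVec_sub, mulVec_smul, Pi.sub_apply, Pi.smul_apply,
    smul_eq_mul]
  module

end Calculus

end GLVectorField

open GLVectorField

def nineFieldsCoord (t : ℝ) (A : Matrix (Fin 3) (Fin 3) ℝ) : Fin 9 → ℝ :=
  ![-A 0 2, -A 1 2, A 2 2 - A 0 0, -A 1 0, -A 0 1, A 2 2 - A 1 1, t * A 2 2, A 2 0, A 2 1]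

lemma nineFieldsCoord_surjective {t : ℝ} (ht : t ≠ 0) : Surjective (nineFieldsCoord t) := by
  intro c
  refine ⟨!![c 6 / t - c 2, -c 4, -c 0; -c 3, c 6 / t - c 5, -c 1; c 7, c 8, c 6 / t], ?_⟩
  ext i
  fin_cases i <;> simp [nineFieldsCoord, ht, mul_div_cancel₀]

lemma glField_eq_linearCombination_nineFields (l : ℕ) (A : Matrix (Fin 3) (Fin 3) ℝ) :
    glField 2 ((l : ℝ) - 1) A =
      Fintype.linearCombination ℝ (nineFields l) (nineFieldsCoord ((l : ℝ) - 1) A) := by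
  ext p j
  rw [Fintype.linearCombination_apply]
  fin_cases j <;>
  · simp [glField, affineChart, baseProj, fiberScale, mulVec, dotProduct, Fin.sum_univ_succ,
      nineFields, nineFieldsCoord]
    ring

lemma range_glFieldₗ_eq_span_nineFields {l : ℕ} (hl : (l : ℝ) - 1 ≠ 0) :
    LinearMap.range (glFieldₗ 2 ((l : ℝ) - 1)) = Submodule.span ℝ (Set.range (nineFields l)) := by
  apply SetLike.coe_injective
  have hφ : ⇑(glFieldₗ 2 ((l : ℝ) - 1)) =
      Fintype.linearCombination ℝ (nineFields l) ∘ nineFieldsCoord ((l : ℝ) - 1) :=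
    funext (glField_eq_linearCombination_nineFields l)
  rw [LinearMap.coe_range, ← Fintype.range_linearCombination, LinearMap.coe_range, hφ,
    (nineFieldsCoord_surjective hl).range_comp]

/-- there is an injective linear map from `gl(3,ℝ)` to vector fields on `ℝ³`
sending matrix commutators to Lie brackets of vector fields, whose range is the span of the
nine fields above.  In particular this span is a Lie algebra isomorphic to `gl(3,ℝ)`. -/
theorem stmt_12 (l : ℕ) (hl : 3 ≤ l) :
    ∃ φ : Matrix (Fin 3) (Fin 3) ℝ →ₗ[ℝ] ((Fin 3 → ℝ) → (Fin 3 → ℝ)),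
      Function.Injective φ ∧
      (∀ A B : Matrix (Fin 3) (Fin 3) ℝ,
        φ (A * B - B * A) = VectorField.lieBracket ℝ (φ A) (φ B)) ∧
      LinearMap.range φ = Submodule.span ℝ (Set.range (nineFields l)) := by
  have ht : (l : ℝ) - 1 ≠ 0 := by
    have : (3 : ℝ) ≤ l := by exact_mod_cast hl
    linarith
  exact ⟨glFieldₗ 2 _, glFieldₗ_injective ht, glField_commutator _,
    range_glFieldₗ_eq_span_nineFields ht⟩
end

section
/- The set of real 5×5 matrices of the form [[a+e₁, c, p, q, 0], [b, −a+e₁, 0, p, q], [0, 0, 2a+e₂, 2c, 0], [0, 0, b, e₂, c], [0, 0, 0, 2b, −2a+e₂]] with a, b, c, e₁, e₂, p, q ranging over ℝ is an ℝ-linear subspace of the 5×5 matrices of dimension exactly 7, and it is closed under the matrix commutator [A,B] = AB − BA; hence it is a 7-dimensional Lie subalgebra of gl(5,ℝ). -/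
open scoped BigOperators

/-- The set of real 5×5 matrices of the form
`[[a+e₁, c, p, q, 0], [b, −a+e₁, 0, p, q], [0, 0, 2a+e₂, 2c, 0], [0, 0, b, e₂, c],
[0, 0, 0, 2b, −2a+e₂]]`, i.e. the symmetry algebra `𝔞^{II}_{2,3}` of the rational normal
scroll `S_{2,3}`. -/
noncomputable def scrollSet : Set (Matrix (Fin 5) (Fin 5) ℝ) :=
  {A | ∃ a b c e₁ e₂ p q : ℝ,
    A = !![a + e₁, c, p, q, 0;
           b, -a + e₁, 0, p, q;
           0, 0, 2*a + e₂, 2*c, 0;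
           0, 0, b, e₂, c;
           0, 0, 0, 2*b, -2*a + e₂]}

/-!
In block form the matrices are `[[X + e₁, N], [0, ρ X + e₂]]`, where `X = [[a, c], [b, -a]]` runs
over `sl₂`, `ρ` is its 3-dimensional irreducible representation and `N = [[p, q, 0], [0, p, q]]`.
The commutator of two of them has diagonal blocks `[X, X']` and `ρ [X, X']` (the scalars cancel),
and its off-diagonal block `X N' - N' ρ X - X' N + N ρ X' + (e₁ - e₂) N' - (e₁' - e₂') N` is again
of the shape of `N`. The parametrisation by `(a, b, c, e₁, e₂, p, q)` is linear, and injective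
because `a` is recovered from `2a = (a + e₁) - (-a + e₁)`; this gives dimension 7.
-/

section ScrollMatrix

variable {R : Type*} [CommRing R]

def scrollMatrix (a b c e₁ e₂ p q : R) : Matrix (Fin 5) (Fin 5) R :=
  !![a + e₁, c, p, q, 0;
     b, -a + e₁, 0, p, q;
     0, 0, 2*a + e₂, 2*c, 0;
     0, 0, b, e₂, c;
     0, 0, 0, 2*b, -2*a + e₂]

theorem scrollMatrix_add (a b c e₁ e₂ p q a' b' c' e₁' e₂' p' q' : R) :
    scrollMatrix a b c e₁ e₂ p q + scrollMatrix a' b' c' e₁' e₂' p' q' =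
      scrollMatrix (a + a') (b + b') (c + c') (e₁ + e₁') (e₂ + e₂') (p + p') (q + q') := by
  ext i j
  fin_cases i <;> fin_cases j <;> simp [scrollMatrix] <;> ring

theorem scrollMatrix_smul (r a b c e₁ e₂ p q : R) :
    r • scrollMatrix a b c e₁ e₂ p q =
      scrollMatrix (r * a) (r * b) (r * c) (r * e₁) (r * e₂) (r * p) (r * q) := by
  ext i j
  fin_cases i <;> fin_cases j <;> simp [scrollMatrix] <;> ring

theorem scrollMatrix_commutator (a b c e₁ e₂ p q a' b' c' e₁' e₂' p' q' : R) :
    scrollMatrix a b c e₁ e₂ p q * scrollMatrix a' b' c' e₁' e₂' p' q' -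
        scrollMatrix a' b' c' e₁' e₂' p' q' * scrollMatrix a b c e₁ e₂ p q =
      scrollMatrix (c * b' - b * c') (2 * (b * a' - a * b')) (2 * (a * c' - c * a')) 0 0
        ((a' + e₂' - e₁') * p - (a + e₂ - e₁) * p' + q * b' - q' * b)
        ((e₂' - e₁' - a') * q - (e₂ - e₁ - a) * q' + p * c' - p' * c) := by
  ext i j
  simp only [Matrix.sub_apply, Matrix.mul_apply, Fin.sum_univ_five]
  fin_cases i <;> fin_cases j <;> simp [scrollMatrix] <;> ring

def scrollMatrixLin : (Fin 7 → R) →ₗ[R] Matrix (Fin 5) (Fin 5) R where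
  toFun v := scrollMatrix (v 0) (v 1) (v 2) (v 3) (v 4) (v 5) (v 6)
  map_add' v w := by simp only [Pi.add_apply, scrollMatrix_add]
  map_smul' r v := by simp only [Pi.smul_apply, smul_eq_mul, RingHom.id_apply, scrollMatrix_smul]

theorem scrollMatrixLin_apply (v : Fin 7 → R) :
    scrollMatrixLin v = scrollMatrix (v 0) (v 1) (v 2) (v 3) (v 4) (v 5) (v 6) :=
  rfl

theorem scrollMatrix_mem_range (a b c e₁ e₂ p q : R) :
    scrollMatrix a b c e₁ e₂ p q ∈ LinearMap.range scrollMatrixLin :=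
  ⟨![a, b, c, e₁, e₂, p, q], rfl⟩

theorem coe_range_scrollMatrixLin :
    (LinearMap.range (scrollMatrixLin (R := R)) : Set (Matrix (Fin 5) (Fin 5) R)) =
      {A | ∃ a b c e₁ e₂ p q : R, A = scrollMatrix a b c e₁ e₂ p q} := by
  ext A
  constructor
  · rintro ⟨v, rfl⟩
    exact ⟨v 0, v 1, v 2, v 3, v 4, v 5, v 6, rfl⟩
  · rintro ⟨a, b, c, e₁, e₂, p, q, rfl⟩
    exact scrollMatrix_mem_range a b c e₁ e₂ p q

theorem scrollMatrixLin_injective [IsAddTorsionFree R] :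
    Function.Injective (scrollMatrixLin (R := R)) := by
  rw [← LinearMap.ker_eq_bot, LinearMap.ker_eq_bot']
  intro v hv
  have entry (i j : Fin 5) : scrollMatrix (v 0) (v 1) (v 2) (v 3) (v 4) (v 5) (v 6) i j = 0 := by
    rw [← scrollMatrixLin_apply, hv, Matrix.zero_apply]
  have h00 : v 0 + v 3 = 0 := entry 0 0
  have h11 : -v 0 + v 3 = 0 := entry 1 1
  have h0 : v 0 = 0 := two_nsmul_eq_zero.mp (by rw [two_nsmul]; linear_combination h00 - h11)
  have h3 : v 3 = 0 := by linear_combination h00 - h0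
  funext i
  fin_cases i
  exacts [h0, entry 1 0, entry 0 1, h3, entry 3 3, entry 0 2, entry 0 3]

theorem rank_range_scrollMatrixLin [StrongRankCondition R] [IsAddTorsionFree R] :
    Module.rank R (LinearMap.range (scrollMatrixLin (R := R))) = 7 := by
  rw [← (LinearEquiv.ofInjective _ scrollMatrixLin_injective).rank_eq, rank_fun']
  simp

theorem commutator_mem_range_scrollMatrixLin {A B : Matrix (Fin 5) (Fin 5) R}
    (hA : A ∈ LinearMap.range scrollMatrixLin) (hB : B ∈ LinearMap.range scrollMatrixLin) :
    A * B - B * A ∈ LinearMap.range scrollMatrixLin := by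
  obtain ⟨v, rfl⟩ := hA
  obtain ⟨w, rfl⟩ := hB
  rw [scrollMatrixLin_apply, scrollMatrixLin_apply, scrollMatrix_commutator]
  apply scrollMatrix_mem_range

end ScrollMatrix

/-- `scrollSet` is an ℝ-linear subspace of the 5×5 matrices of dimension
exactly 7, closed under the matrix commutator; hence it is a 7-dimensional Lie subalgebra
of `gl(5,ℝ)`. -/
theorem stmt_17 :
    ∃ S : Submodule ℝ (Matrix (Fin 5) (Fin 5) ℝ),
      (S : Set (Matrix (Fin 5) (Fin 5) ℝ)) = scrollSet ∧
      Module.rank ℝ ↥S = (7 : Cardinal) ∧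
      (∀ A ∈ S, ∀ B ∈ S, A * B - B * A ∈ S) :=
  ⟨LinearMap.range scrollMatrixLin, coe_range_scrollMatrixLin, rank_range_scrollMatrixLin,
    fun _ hA _ hB => commutator_mem_range_scrollMatrixLin hA hB⟩
end
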